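/- For every positive integer n and all real numbers α and β, the n×n Hankel determinant det(αβ·c_{i+j} + (α+β)·c_{i+j+1} + c_{i+j+2})_{i,j=0}^{n−1} equals (Σ_{j=0}^{n} (∏_{ℓ=2j}^{2n−1} T_ℓ)·g_{2j}(α)·g_{2j}(β)) · det(c_{i+j})_{i,j=0}^{n−1}. -/

import Mathlib

/-!
Cutting a path of length `m + p` at time `m` gives `c(m + p, 0) = ∑ₖ c(m, k) wₖ c(p, k)` with
`wₖ = T₀ ⋯ T_{k-1}`, and by parity only even levels `k` occur when `m, p` are even. Hence
`(c_{i+j}) = L D Lᵀ` with `L = (c(2i, 2k))` unitriangular and `D = diag(w_{2k})`, and the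
three-term Hankel matrix is `A_α D Aᵀ_β` with `A_α = (α c(2i, 2k) + c(2i + 2, 2k))` of size
`n × (n + 1)`. The last column of `A_α` is a unit vector, so its contribution is a rank-one update,
which yields a recursion in `n` for the determinant. The square part of `A_α` has determinant
`g_{2n}(α)` by Cramer's rule: the vector `((-1)ᵏ g_{2k}(α))ₖ` is annihilated by `A_α`, because
`∑ₖ (-1)ᵏ g_{2k}(α) c(2m, 2k) = (-α)ᵐ`.
-/

/-- `dyckGF T n k` is the weighted Dyck path generating function `c(n,k)`:
`c(0,k) = [k = 0]`, `c(n,k) = 0` for `k < 0`, and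
`c(n,k) = c(n-1,k-1) + T_k c(n-1,k+1)` for `n ≥ 1`, `k ≥ 0`. -/
def dyckGF (T : ℕ → ℝ) : ℕ → ℤ → ℝ
  | 0, k => if k = 0 then 1 else 0
  | n+1, k =>
      if k < 0 then 0
      else dyckGF T n (k-1) + T k.toNat * dyckGF T n (k+1)

/-- The polynomials `g_n(α)`: `g_0 = 1`, `g_1 = 1`,
`g_{2n}(α) = α g_{2n-1}(α) + T_{2n-2} g_{2n-2}(α)` and
`g_{2n+1}(α) = g_{2n}(α) + T_{2n-1} g_{2n-1}(α)` for `n ≥ 1`. -/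
def gpoly (T : ℕ → ℝ) (α : ℝ) : ℕ → ℝ
  | 0 => 1
  | 1 => 1
  | n+2 => (if (n+2) % 2 = 0 then α else 1) * gpoly T α (n+1) + T n * gpoly T α n

open Finset Matrix

lemma sum_range_two_mul_of_odd_eq_zero {M : Type*} [AddCommMonoid M] (f : ℕ → M)
    (hf : ∀ k, f (2 * k + 1) = 0) (N : ℕ) :
    ∑ k ∈ range (2 * N), f k = ∑ k ∈ range N, f (2 * k) := by
  induction N with
  | zero => simp
  | succ N ih => rw [mul_add_one, sum_range_succ, sum_range_succ, ih, hf, add_zero, sum_range_succ]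

namespace Matrix

variable {R : Type*} [CommRing R]

/-- Cramer's rule for the coordinate `v 0`. -/
lemma det_eq_of_mulVec_eq_single_last {n : ℕ} (A : Matrix (Fin (n + 1)) (Fin (n + 1)) R)
    {v : Fin (n + 1) → R} (hv0 : v 0 = 1) {c : R} (hv : A *ᵥ v = Pi.single (Fin.last n) c) :
    A.det = (-1) ^ n * c * (A.submatrix Fin.castSucc Fin.succ).det := by
  have h := congrFun (congrArg (· *ᵥ v) (adjugate_mul A)) 0
  simp only [← mulVec_mulVec, hv, mulVec_single, smul_mulVec, one_mulVec] at h
  simp only [Pi.smul_apply, col_apply, adjugate_fin_succ_eq_det_submatrix, Fin.val_last,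
    Fin.coe_ofNat_eq_mod, Nat.zero_mod, add_zero, Fin.succAbove_last, Fin.succAbove_zero,
    MulOpposite.smul_eq_mul_unop, MulOpposite.unop_op, hv0, smul_eq_mul, mul_one] at h
  rw [← h]
  ring

lemma det_add_single_last {n : ℕ} (A : Matrix (Fin (n + 1)) (Fin (n + 1)) R) (c : R) :
    (A + single (Fin.last n) (Fin.last n) c).det
      = A.det + c * (A.submatrix Fin.castSucc Fin.castSucc).det := by
  have hrow : A + single (Fin.last n) (Fin.last n) c
      = A.updateRow (Fin.last n) (A (Fin.last n) + c • Pi.single (Fin.last n) 1) := by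
    ext i j
    by_cases hi : i = Fin.last n
    · subst hi
      by_cases hj : j = Fin.last n
      · simp [hj]
      · simp [hj, Ne.symm hj]
    · simp [hi, Ne.symm hi]
  rw [hrow, det_updateRow_add, updateRow_eq_self, det_updateRow_smul, ← adjugate_apply,
    adjugate_fin_succ_eq_det_submatrix, Fin.succAbove_last, ← two_mul, pow_mul]
  simp

def weightedGram (u v : ℕ → ℕ → R) (d : ℕ → R) (n N : ℕ) : Matrix (Fin n) (Fin n) R :=
  of fun i j => ∑ k ∈ range N, u i k * d k * v j k

variable (u v : ℕ → ℕ → R) (d : ℕ → R)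

lemma weightedGram_succ (n N : ℕ) :
    weightedGram u v d n (N + 1)
      = weightedGram u v d n N + of fun i j : Fin n => u i N * d N * v j N := by
  ext i j
  simp [weightedGram, sum_range_succ]

lemma submatrix_castSucc_weightedGram (n N : ℕ) :
    (weightedGram u v d (n + 1) N).submatrix Fin.castSucc Fin.castSucc = weightedGram u v d n N :=
  rfl

lemma weightedGram_self (n : ℕ) :
    weightedGram u v d n n = (of fun i k : Fin n => u i k) * diagonal (fun k : Fin n => d k)
      * (of fun j k : Fin n => v j k)ᵀ := by
  ext i j
  simp [weightedGram, mul_apply, diagonal_apply,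
    ← Fin.sum_univ_eq_sum_range (fun k => u i k * d k * v j k)]

lemma det_weightedGram_self (n : ℕ) :
    (weightedGram u v d n n).det = (of fun i k : Fin n => u i k).det * (∏ k ∈ range n, d k)
      * (of fun j k : Fin n => v j k).det := by
  rw [weightedGram_self, det_mul, det_mul, det_transpose, det_diagonal,
    Fin.prod_univ_eq_prod_range]

end Matrix

namespace DyckHankel

variable (T : ℕ → ℝ) (α β : ℝ)

lemma dyckGF_of_neg (n : ℕ) {k : ℤ} (hk : k < 0) : dyckGF T n k = 0 := by
  cases n <;> simp [dyckGF, hk, hk.ne]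

noncomputable def dyck (n k : ℕ) : ℝ := dyckGF T n k

lemma dyck_zero (k : ℕ) : dyck T 0 k = if k = 0 then 1 else 0 := by
  simp [dyck, dyckGF]

lemma dyck_succ_zero (n : ℕ) : dyck T (n + 1) 0 = T 0 * dyck T n 1 := by
  simp [dyck, dyckGF, dyckGF_of_neg]

lemma dyck_succ_succ (n k : ℕ) :
    dyck T (n + 1) (k + 1) = dyck T n k + T (k + 1) * dyck T n (k + 2) := by
  have hk : ¬ ((k + 1 : ℕ) : ℤ) < 0 := by omega
  simp only [dyck, dyckGF, if_neg hk]
  push_cast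
  simp [add_assoc]

lemma dyck_eq_zero_of_lt {n k : ℕ} (h : n < k) : dyck T n k = 0 := by
  induction n generalizing k with
  | zero => simp [dyck_zero, h.ne']
  | succ n ih =>
    obtain ⟨k, rfl⟩ := Nat.exists_eq_add_one_of_ne_zero (by omega : k ≠ 0)
    rw [dyck_succ_succ, ih (by omega), ih (by omega), mul_zero, add_zero]

lemma dyck_self (n : ℕ) : dyck T n n = 1 := by
  induction n with
  | zero => simp [dyck_zero]
  | succ n ih => rw [dyck_succ_succ, ih, dyck_eq_zero_of_lt T (by omega), mul_zero, add_zero]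

lemma dyck_eq_zero_of_odd {n k : ℕ} (h : Odd (n + k)) : dyck T n k = 0 := by
  induction n generalizing k with
  | zero =>
    rw [dyck_zero, if_neg]
    rintro rfl
    simp at h
  | succ n ih =>
    have hmod := Nat.odd_iff.1 h
    cases k with
    | zero => rw [dyck_succ_zero, ih (Nat.odd_iff.2 (by omega)), mul_zero]
    | succ k =>
      rw [dyck_succ_succ, ih (Nat.odd_iff.2 (by omega)), ih (Nat.odd_iff.2 (by omega)),
        mul_zero, add_zero]

lemma det_dyck_even (n : ℕ) : (of fun i k : Fin n => dyck T (2 * i) (2 * k)).det = 1 := by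
  rw [det_of_isLowerTriangular]
  · exact prod_eq_one fun i _ => dyck_self T _
  · intro i k (hik : i < k)
    exact dyck_eq_zero_of_lt T (by omega : 2 * (i : ℕ) < 2 * k)

noncomputable def levelWeight (k : ℕ) : ℝ := ∏ l ∈ range k, T l

lemma levelWeight_succ (k : ℕ) : levelWeight T (k + 1) = levelWeight T k * T k :=
  prod_range_succ T k

lemma levelWeight_two_mul_succ (n : ℕ) :
    levelWeight T (2 * (n + 1)) = levelWeight T (2 * n) * (T (2 * n) * T (2 * n + 1)) := by
  rw [mul_add_one, levelWeight_succ, levelWeight_succ, mul_assoc]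

noncomputable def pathSum (m : ℕ) (v : ℕ → ℝ) : ℝ := ∑ k ∈ range (m + 1), dyck T m k * v k

lemma sum_range_dyck_mul {m N : ℕ} (hm : m < N) (v : ℕ → ℝ) :
    ∑ k ∈ range N, dyck T m k * v k = pathSum T m v := by
  refine (sum_subset (range_subset_range.2 hm) fun k _ hk => ?_).symm
  rw [dyck_eq_zero_of_lt T (by simpa using hk), zero_mul]

lemma pathSum_zero (v : ℕ → ℝ) : pathSum T 0 v = v 0 := by
  simp [pathSum, dyck_zero]

lemma pathSum_smul (m : ℕ) (a : ℝ) (v : ℕ → ℝ) :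
    pathSum T m (fun k => a * v k) = a * pathSum T m v := by
  simp only [pathSum, mul_sum]
  exact sum_congr rfl fun k _ => by ring

/-- The adjoint of the recursion `c(n, ·) ↦ c(n + 1, ·)`, see `pathSum_succ`. -/
def transfer (v : ℕ → ℝ) : ℕ → ℝ
  | 0 => v 1
  | k + 1 => v (k + 2) + T k * v k

lemma pathSum_succ (m : ℕ) (v : ℕ → ℝ) : pathSum T (m + 1) v = pathSum T m (transfer T v) := by
  have hup : ∑ k ∈ range (m + 1), dyck T m k * v (k + 1)
      = ∑ k ∈ range (m + 1), dyck T m (k + 1) * v (k + 2) + dyck T m 0 * v 1 := by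
    have := sum_range_succ' (fun k => dyck T m k * v (k + 1)) (m + 1)
    rwa [sum_range_succ, dyck_eq_zero_of_lt T (by omega), zero_mul, add_zero] at this
  have hdown : ∑ k ∈ range (m + 1), T (k + 1) * dyck T m (k + 2) * v (k + 1)
      + T 0 * dyck T m 1 * v 0 = ∑ k ∈ range (m + 1), dyck T m (k + 1) * (T k * v k) := by
    have := sum_range_succ' (fun k => T k * dyck T m (k + 1) * v k) (m + 1)
    rw [sum_range_succ, dyck_eq_zero_of_lt T (by omega), mul_zero, zero_mul, add_zero] at this
    rw [← this]
    exact sum_congr rfl fun k _ => by ring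
  rw [pathSum, ← sum_range_dyck_mul T (by omega : m < m + 2), sum_range_succ',
    sum_range_succ' (fun k => dyck T m k * transfer T v k)]
  simp only [dyck_succ_succ, dyck_succ_zero, transfer, add_mul, mul_add, sum_add_distrib]
  linear_combination hup + hdown

lemma transfer_levelWeight_mul_dyck (p : ℕ) :
    transfer T (fun k => levelWeight T k * dyck T p k)
      = fun k => levelWeight T k * dyck T (p + 1) k := by
  funext k
  cases k with
  | zero => simp [transfer, levelWeight, dyck_succ_zero]
  | succ k =>
    simp only [transfer, dyck_succ_succ, levelWeight_succ]
    ring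

/-- Read backwards, the second piece of a path cut at time `m` at level `k` has its up- and
down-steps exchanged, which costs the factor `levelWeight T k`. -/
lemma dyck_add_zero (m p : ℕ) :
    dyck T (m + p) 0 = pathSum T m (fun k => levelWeight T k * dyck T p k) := by
  induction m generalizing p with
  | zero => simp [pathSum_zero, levelWeight]
  | succ m ih =>
    rw [pathSum_succ, transfer_levelWeight_mul_dyck, ← ih, add_right_comm, add_assoc]

lemma sum_range_dyck_even_mul {i N : ℕ} (hi : i < N) (v : ℕ → ℝ) :
    ∑ k ∈ range N, dyck T (2 * i) (2 * k) * v (2 * k) = pathSum T (2 * i) v := by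
  rw [← sum_range_two_mul_of_odd_eq_zero (fun k => dyck T (2 * i) k * v k),
    sum_range_dyck_mul T (by omega)]
  intro k
  rw [dyck_eq_zero_of_odd T (by rw [← add_assoc, ← mul_add]; exact odd_two_mul_add_one _),
    zero_mul]

lemma sum_range_dyck_even_mul_dyck {i N : ℕ} (hi : i < N) (p : ℕ) :
    ∑ k ∈ range N, dyck T (2 * i) (2 * k) * levelWeight T (2 * k) * dyck T p (2 * k)
      = dyck T (2 * i + p) 0 := by
  simp only [mul_assoc]
  rw [sum_range_dyck_even_mul T hi (fun k => levelWeight T k * dyck T p k), dyck_add_zero]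

lemma gpoly_two_mul_add_two (k : ℕ) :
    gpoly T α (2 * k + 2) = α * gpoly T α (2 * k + 1) + T (2 * k) * gpoly T α (2 * k) := by
  rw [gpoly, if_pos (by omega)]

lemma gpoly_two_mul_add_three (k : ℕ) :
    gpoly T α (2 * k + 3) = gpoly T α (2 * k + 2) + T (2 * k + 1) * gpoly T α (2 * k + 1) := by
  rw [gpoly, if_neg (by omega), one_mul]

noncomputable def signedGpoly (j : ℕ) : ℝ := (-1) ^ (j / 2) * gpoly T α j

lemma transfer_signedGpoly (j : ℕ) :
    transfer T (signedGpoly T α) j = (if Even j then 1 else -α) * signedGpoly T α j := by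
  cases j with
  | zero => simp [transfer, signedGpoly, gpoly]
  | succ k =>
    obtain ⟨r, rfl | rfl⟩ := Nat.even_or_odd' k
    · rw [if_neg (by simp [parity_simps]), transfer, signedGpoly, signedGpoly, signedGpoly,
        show (2 * r + 2) / 2 = r + 1 by omega, show (2 * r + 1) / 2 = r by omega,
        show 2 * r / 2 = r by omega, gpoly_two_mul_add_two, pow_succ]
      ring
    · rw [if_pos (by simp [parity_simps]), transfer, signedGpoly, signedGpoly, signedGpoly,
        show 2 * r + 1 + 2 = 2 * r + 3 by omega, show (2 * r + 3) / 2 = r + 1 by omega,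
        show (2 * r + 1) / 2 = r by omega, show (2 * r + 1 + 1) / 2 = r + 1 by omega,
        show 2 * r + 1 + 1 = 2 * r + 2 by omega, gpoly_two_mul_add_three, pow_succ]
      ring

lemma transfer_transfer_signedGpoly :
    transfer T (transfer T (signedGpoly T α)) = fun j => -α * signedGpoly T α j := by
  funext j
  cases j with
  | zero =>
    rw [transfer, transfer_signedGpoly]
    simp [signedGpoly, gpoly]
  | succ k =>
    have h := transfer_signedGpoly T α (k + 1)
    rw [transfer] at h
    have hparity : (if Even (k + 2) then (1 : ℝ) else -α) = if Even k then 1 else -α := by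
      simp [Nat.even_add]
    have hprod : (if Even k then (1 : ℝ) else -α) * (if Even (k + 1) then 1 else -α) = -α := by
      by_cases hk : Even k <;> simp [hk, Nat.even_add_one]
    rw [transfer, transfer_signedGpoly, transfer_signedGpoly, hparity]
    linear_combination (if Even k then (1 : ℝ) else -α) * h + signedGpoly T α (k + 1) * hprod

lemma pathSum_signedGpoly (m : ℕ) : pathSum T (2 * m) (signedGpoly T α) = (-α) ^ m := by
  induction m with
  | zero => simp [pathSum_zero, signedGpoly, gpoly]
  | succ m ih =>
    rw [mul_add_one, pathSum_succ, pathSum_succ, transfer_transfer_signedGpoly, pathSum_smul, ih,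
      pow_succ, mul_comm]

noncomputable def dyckFactor (i k : ℕ) : ℝ :=
  α * dyck T (2 * i) (2 * k) + dyck T (2 * (i + 1)) (2 * k)

lemma dyckFactor_eq_zero_of_lt {i k : ℕ} (h : i + 1 < k) : dyckFactor T α i k = 0 := by
  rw [dyckFactor, dyck_eq_zero_of_lt T (by omega), dyck_eq_zero_of_lt T (by omega), mul_zero,
    add_zero]

lemma dyckFactor_self_add_one (i : ℕ) : dyckFactor T α i (i + 1) = 1 := by
  rw [dyckFactor, dyck_eq_zero_of_lt T (by omega), dyck_self, mul_zero, zero_add]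

lemma dyckFactor_last {n : ℕ} (i : Fin (n + 1)) :
    dyckFactor T α i (n + 1) = if i = Fin.last n then 1 else 0 := by
  split_ifs with h
  · rw [h, Fin.val_last, dyckFactor_self_add_one]
  · exact dyckFactor_eq_zero_of_lt T α (by have := Fin.val_lt_last h; omega)

lemma sum_range_dyckFactor_mul_signedGpoly {i N : ℕ} (hi : i + 1 < N) :
    ∑ k ∈ range N, dyckFactor T α i k * signedGpoly T α (2 * k) = 0 := by
  simp only [dyckFactor, add_mul, sum_add_distrib, mul_assoc, ← mul_sum]
  rw [sum_range_dyck_even_mul T (by omega), sum_range_dyck_even_mul T hi, pathSum_signedGpoly,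
    pathSum_signedGpoly, pow_succ]
  ring

lemma det_dyckFactor (n : ℕ) :
    (of fun i k : Fin n => dyckFactor T α i k).det = gpoly T α (2 * n) := by
  cases n with
  | zero => simp [gpoly]
  | succ n =>
    have hker :
        (of fun i k : Fin (n + 1) => dyckFactor T α i k) *ᵥ (fun k => signedGpoly T α (2 * k))
        = Pi.single (Fin.last n) (-signedGpoly T α (2 * (n + 1))) := by
      ext i
      have h := sum_range_dyckFactor_mul_signedGpoly T α (i := i) (N := n + 2) (by omega)
      rw [sum_range_succ, dyckFactor_last, ← Fin.sum_univ_eq_sum_range] at h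
      rw [mulVec, dotProduct, Pi.single_apply]
      split_ifs at h ⊢ <;> simpa [eq_neg_iff_add_eq_zero] using h
    have hminor :
        ((of fun i k : Fin (n + 1) => dyckFactor T α i k).submatrix Fin.castSucc Fin.succ).det
          = 1 := by
      rw [det_of_isLowerTriangular]
      · exact prod_eq_one fun i _ => dyckFactor_self_add_one T α i
      · intro i k (hik : i < k)
        exact dyckFactor_eq_zero_of_lt T α (i := i) (k := k + 1) (by omega)
    have hsign : (-1 : ℝ) ^ n * (-1) ^ n = 1 := by
      rw [← mul_pow]
      norm_num
    rw [det_eq_of_mulVec_eq_single_last _ (by simp [signedGpoly, gpoly]) hker, hminor, signedGpoly,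
      Nat.mul_div_cancel_left _ two_pos, pow_succ]
    linear_combination gpoly T α (2 * (n + 1)) * hsign

lemma sum_range_dyckFactor_mul_dyckFactor {i N : ℕ} (hi : i < N) (j : ℕ) :
    ∑ k ∈ range (N + 1), dyckFactor T α i k * levelWeight T (2 * k) * dyckFactor T β j k
      = α * β * dyck T (2 * (i + j)) 0 + (α + β) * dyck T (2 * (i + j + 1)) 0
        + dyck T (2 * (i + j + 2)) 0 := by
  have expand : ∀ k, dyckFactor T α i k * levelWeight T (2 * k) * dyckFactor T β j k
      = α * β * (dyck T (2 * i) (2 * k) * levelWeight T (2 * k) * dyck T (2 * j) (2 * k))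
        + α * (dyck T (2 * i) (2 * k) * levelWeight T (2 * k) * dyck T (2 * (j + 1)) (2 * k))
        + β * (dyck T (2 * (i + 1)) (2 * k) * levelWeight T (2 * k) * dyck T (2 * j) (2 * k))
        + dyck T (2 * (i + 1)) (2 * k) * levelWeight T (2 * k) * dyck T (2 * (j + 1)) (2 * k) :=
    fun k => by rw [dyckFactor, dyckFactor]; ring
  simp only [expand, sum_add_distrib, ← mul_sum,
    sum_range_dyck_even_mul_dyck T (by omega : i < N + 1),
    sum_range_dyck_even_mul_dyck T (by omega : i + 1 < N + 1)]
  rw [show 2 * i + 2 * (j + 1) = 2 * (i + j + 1) by ring,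
    show 2 * (i + 1) + 2 * j = 2 * (i + j + 1) by ring,
    show 2 * (i + 1) + 2 * (j + 1) = 2 * (i + j + 2) by ring,
    show 2 * i + 2 * j = 2 * (i + j) by ring]
  ring

lemma weightedGram_dyckFactor_succ (n : ℕ) :
    weightedGram (dyckFactor T α) (dyckFactor T β) (fun k => levelWeight T (2 * k)) (n + 1) (n + 2)
      = weightedGram (dyckFactor T α) (dyckFactor T β) (fun k => levelWeight T (2 * k))
          (n + 1) (n + 1)
        + single (Fin.last n) (Fin.last n) (levelWeight T (2 * (n + 1))) := by
  rw [weightedGram_succ]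
  congr 1
  ext i j
  by_cases hi : i = Fin.last n <;> by_cases hj : j = Fin.last n <;>
    simp [dyckFactor_last, hi, hj, eq_comm]

lemma prod_Ico_two_mul_succ {j n : ℕ} (hj : j ≤ n) :
    ∏ l ∈ Ico (2 * j) (2 * (n + 1)), T l
      = (∏ l ∈ Ico (2 * j) (2 * n), T l) * (T (2 * n) * T (2 * n + 1)) := by
  rw [mul_add_one, prod_Ico_succ_top (by omega), prod_Ico_succ_top (by omega), mul_assoc]

lemma det_weightedGram_dyckFactor (n : ℕ) :
    (weightedGram (dyckFactor T α) (dyckFactor T β) (fun k => levelWeight T (2 * k)) n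
        (n + 1)).det
      = (∑ j ∈ range (n + 1),
          (∏ l ∈ Ico (2 * j) (2 * n), T l) * gpoly T α (2 * j) * gpoly T β (2 * j))
        * ∏ k ∈ range n, levelWeight T (2 * k) := by
  induction n with
  | zero => simp [gpoly]
  | succ n ih =>
    have hsum : ∑ j ∈ range (n + 1),
          (∏ l ∈ Ico (2 * j) (2 * (n + 1)), T l) * gpoly T α (2 * j) * gpoly T β (2 * j)
        = T (2 * n) * T (2 * n + 1) * ∑ j ∈ range (n + 1),
          (∏ l ∈ Ico (2 * j) (2 * n), T l) * gpoly T α (2 * j) * gpoly T β (2 * j) := by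
      rw [mul_sum]
      exact sum_congr rfl fun j hj => by
        rw [prod_Ico_two_mul_succ T (Nat.lt_succ_iff.1 (mem_range.1 hj))]
        ring
    rw [weightedGram_dyckFactor_succ, det_add_single_last, submatrix_castSucc_weightedGram, ih,
      det_weightedGram_self, det_dyckFactor, det_dyckFactor, sum_range_succ _ (n + 1), hsum,
      Ico_self, prod_empty, prod_range_succ, levelWeight_two_mul_succ]
    ring

lemma threeTerm_eq_weightedGram (n : ℕ) :
    (of fun i j : Fin n =>
        α * β * dyckGF T (2 * ((i : ℕ) + (j : ℕ))) 0
          + (α + β) * dyckGF T (2 * ((i : ℕ) + (j : ℕ) + 1)) 0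
          + dyckGF T (2 * ((i : ℕ) + (j : ℕ) + 2)) 0)
      = weightedGram (dyckFactor T α) (dyckFactor T β) (fun k => levelWeight T (2 * k))
          n (n + 1) := by
  ext i j
  exact (sum_range_dyckFactor_mul_dyckFactor T α β i.isLt j).symm

lemma hankel_eq_weightedGram (n : ℕ) :
    (of fun i j : Fin n => dyckGF T (2 * ((i : ℕ) + (j : ℕ))) 0)
      = weightedGram (fun i k => dyck T (2 * i) (2 * k)) (fun j k => dyck T (2 * j) (2 * k))
          (fun k => levelWeight T (2 * k)) n n := by
  ext i j
  simp only [weightedGram, of_apply]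
  rw [sum_range_dyck_even_mul_dyck T i.isLt, mul_add]
  rfl

end DyckHankel

open DyckHankel in
theorem hankel_three_term_dyck_even_general (T : ℕ → ℝ)
    (n : ℕ) (α β : ℝ) :
    Matrix.det (Matrix.of fun i j : Fin n =>
        α * β * dyckGF T (2 * ((i : ℕ) + (j : ℕ))) 0
          + (α + β) * dyckGF T (2 * ((i : ℕ) + (j : ℕ) + 1)) 0
          + dyckGF T (2 * ((i : ℕ) + (j : ℕ) + 2)) 0)
      = (∑ j ∈ Finset.range (n + 1),
            (∏ ℓ ∈ Finset.Ico (2 * j) (2 * n), T ℓ) * gpoly T α (2 * j) * gpoly T β (2 * j))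
        * Matrix.det (Matrix.of fun i j : Fin n =>
            dyckGF T (2 * ((i : ℕ) + (j : ℕ))) 0) := by
  rw [threeTerm_eq_weightedGram, hankel_eq_weightedGram, det_weightedGram_dyckFactor,
    det_weightedGram_self, det_dyck_even, one_mul, mul_one]

/-- Corollary 2, Eq. (2.9): for `n ≥ 1` and real `α, β`,
`det(αβ c_{i+j} + (α+β) c_{i+j+1} + c_{i+j+2})_{i,j=0}^{n-1}
  = (∑_{j=0}^{n} (∏_{ℓ=2j}^{2n-1} T_ℓ) g_{2j}(α) g_{2j}(β)) · det(c_{i+j})_{i,j=0}^{n-1}`,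
where `c_n = c(2n, 0)`. -/
theorem hankel_three_term_dyck_even (T : ℕ → ℝ) (hT : ∀ n, T n ≠ 0)
    (n : ℕ) (hn : 0 < n) (α β : ℝ) :
    Matrix.det (Matrix.of fun i j : Fin n =>
        α * β * dyckGF T (2 * ((i : ℕ) + (j : ℕ))) 0
          + (α + β) * dyckGF T (2 * ((i : ℕ) + (j : ℕ) + 1)) 0
          + dyckGF T (2 * ((i : ℕ) + (j : ℕ) + 2)) 0)
      = (∑ j ∈ Finset.range (n + 1),
            (∏ ℓ ∈ Finset.Ico (2 * j) (2 * n), T ℓ) * gpoly T α (2 * j) * gpoly T β (2 * j))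
        * Matrix.det (Matrix.of fun i j : Fin n =>
            dyckGF T (2 * ((i : ℕ) + (j : ℕ))) 0) :=
  hankel_three_term_dyck_even_general T n α β
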